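/- Let V be a finite-dimensional real inner product space, let Δ ⊆ V be a closed convex set with 0 ∈ Δ, and let ∇ := {x ∈ V | ⟨u, x⟩ ≥ −1 for all u ∈ Δ} be its polar. Then the closure of ⋃_{t ≥ 0} t•∇ equals the dual cone of the tail cone of Δ, i.e., closure(head(∇)) = {x ∈ V | ⟨y, x⟩ ≥ 0 for all y ∈ tail(Δ)}, where tail(Δ) := {y ∈ V | w + t•y ∈ Δ for all w ∈ Δ and all t ≥ 0}. -/

import Mathlib

/-!
The head of the polar `∇` of `Δ` is the conic hull of `∇`, because `∇` is convex and contains `0`;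
by the bipolar theorem for cones its closure is therefore the double inner dual `∇**`. So it
suffices to show `∇* = tail Δ`. If `y ∈ tail Δ` and `x ∈ ∇`, then `t • y ∈ Δ` gives
`t ⟪y, x⟫ ≥ -1` for all `t ≥ 0`, whence `⟪y, x⟫ ≥ 0`. Conversely, if `w + t • y ∉ Δ`, a
hyperplane separating it from `Δ`, normalised using `0 ∈ Δ`, is a point `x ∈ ∇` with
`⟪w + t • y, x⟫ < -1`, which forces `⟪y, x⟫ < 0`.
-/

open RealInnerProductSpace Pointwise

section ConeHull

variable {𝕜 M : Type*} [Field 𝕜] [LinearOrder 𝕜] [IsStrictOrderedRing 𝕜]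
  [AddCommGroup M] [Module 𝕜 M] {s : Set M}

theorem Convex.coe_pointedConeHull_eq_biUnion_smul (hs : Convex 𝕜 s) (hne : s.Nonempty) :
    (PointedCone.hull 𝕜 s : Set M) = ⋃ t ∈ Set.Ici (0 : 𝕜), t • s := by
  ext x
  simp only [SetLike.mem_coe, Set.mem_iUnion, Set.mem_Ici, exists_prop]
  constructor
  · intro hx
    induction hx using Submodule.span_induction with
    | mem x hx => exact ⟨1, zero_le_one, by simpa using hx⟩
    | zero =>
      obtain ⟨p, hp⟩ := hne
      exact ⟨0, le_rfl, p, hp, zero_smul 𝕜 p⟩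
    | add x y _ _ hx hy =>
      obtain ⟨a, ha, hxa⟩ := hx
      obtain ⟨b, hb, hyb⟩ := hy
      exact ⟨a + b, add_nonneg ha hb, hs.add_smul ha hb ▸ Set.add_mem_add hxa hyb⟩
    | smul c x _ hx =>
      obtain ⟨a, ha, p, hp, rfl⟩ := hx
      exact ⟨c * a, mul_nonneg c.2 ha, p, hp, mul_smul (c : 𝕜) a p⟩
  · rintro ⟨t, ht, p, hp, rfl⟩
    exact (PointedCone.hull 𝕜 s).smul_mem ht (PointedCone.subset_hull hp)

end ConeHull

section InnerProductSpace

variable {E : Type*} [NormedAddCommGroup E] [InnerProductSpace ℝ E]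

theorem ProperCone.coe_innerDual_innerDual [CompleteSpace E] (s : Set E) :
    (innerDual (innerDual s : Set E) : Set E) = closure (PointedCone.hull ℝ s) := by
  set K : ProperCone ℝ E := Submodule.closure (PointedCone.hull ℝ s)
  suffices innerDual (innerDual s : Set E) = K by rw [this]; rfl
  apply le_antisymm
  · calc innerDual (innerDual s : Set E) ≤ innerDual (innerDual (K : Set E) : Set E) := by
          gcongr
          exact PointedCone.subset_hull.trans subset_closure
      _ = K := innerDual_innerDual K
  · rw [Submodule.closure_le, Submodule.span_le]
    intro x hx y hy
    simpa [real_inner_comm] using hy hx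

def innerPolar (s : Set E) : Set E := {x | ∀ u ∈ s, -1 ≤ ⟪u, x⟫}

/-- For nonempty closed convex sets this agrees with Mathlib's `asymptoticCone`. -/
def recessionCone (s : Set E) : Set E := {y | ∀ w ∈ s, ∀ t : ℝ, 0 ≤ t → w + t • y ∈ s}

theorem zero_mem_innerPolar (s : Set E) : (0 : E) ∈ innerPolar s := fun u _ ↦ by simp

theorem convex_innerPolar (s : Set E) : Convex ℝ (innerPolar s) := by
  simp only [innerPolar, Set.ofPred_forall]
  exact convex_iInter₂ fun u _ ↦ convex_halfSpace_ge (innerₗ E u).isLinear (-1)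

theorem nonneg_of_forall_nonneg_neg_one_le_mul {a : ℝ} (h : ∀ t : ℝ, 0 ≤ t → -1 ≤ t * a) :
    0 ≤ a := by
  by_contra! ha
  have := h (-2 / a) (div_nonneg_of_nonpos (by norm_num) ha.le)
  rw [div_mul_cancel₀ _ ha.ne] at this
  norm_num at this

theorem recessionCone_subset_innerDual_innerPolar [CompleteSpace E] {s : Set E} (h0 : 0 ∈ s) :
    recessionCone s ⊆ ProperCone.innerDual (innerPolar s) := by
  intro y hy x hx
  refine nonneg_of_forall_nonneg_neg_one_le_mul fun t ht ↦ ?_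
  have := hx (t • y) (by simpa using hy 0 h0 t ht)
  rwa [real_inner_smul_left, real_inner_comm] at this

theorem exists_mem_innerPolar_inner_lt_neg_one [CompleteSpace E] {s : Set E} (hcl : IsClosed s)
    (hconv : Convex ℝ s) (h0 : 0 ∈ s) {z : E} (hz : z ∉ s) :
    ∃ x ∈ innerPolar s, ⟪z, x⟫ < -1 := by
  obtain ⟨f, u, hfs, hfz⟩ := geometric_hahn_banach_closed_point hconv hcl hz
  have hu : 0 < u := by simpa using hfs 0 h0
  set x := (-u⁻¹) • (InnerProductSpace.toDual ℝ E).symm f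
  have hx : ∀ a, ⟪a, x⟫ = -(f a / u) := fun a ↦ by
    rw [real_inner_smul_right, real_inner_comm, InnerProductSpace.toDual_symm_apply]
    ring
  refine ⟨x, fun a ha ↦ ?_, ?_⟩
  · rw [hx, neg_le_neg_iff, div_le_one hu]
    exact (hfs a ha).le
  · rw [hx, neg_lt_neg_iff, one_lt_div hu]
    exact hfz

theorem innerDual_innerPolar_subset_recessionCone [CompleteSpace E] {s : Set E}
    (hcl : IsClosed s) (hconv : Convex ℝ s) (h0 : 0 ∈ s) :
    (ProperCone.innerDual (innerPolar s) : Set E) ⊆ recessionCone s := by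
  intro y hy w hw t ht
  by_contra hz
  obtain ⟨x, hx, hzx⟩ := exists_mem_innerPolar_inner_lt_neg_one hcl hconv h0 hz
  rw [inner_add_left, real_inner_smul_left] at hzx
  have hxy : 0 ≤ ⟪y, x⟫ := by simpa [real_inner_comm] using hy hx
  linarith [hx w hw, mul_nonneg ht hxy]

theorem coe_innerDual_innerPolar [CompleteSpace E] {s : Set E} (hcl : IsClosed s)
    (hconv : Convex ℝ s) (h0 : 0 ∈ s) :
    (ProperCone.innerDual (innerPolar s) : Set E) = recessionCone s :=
  (innerDual_innerPolar_subset_recessionCone hcl hconv h0).antisymm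
    (recessionCone_subset_innerDual_innerPolar h0)

end InnerProductSpace

/-- **(4.2 headTail).** For a closed convex set `Δ ∋ 0` with polar `∇`, the closure
of `head(∇) = ⋃_{t ≥ 0} t • ∇` equals the dual cone of `tail(Δ)`. -/
theorem closure_head_of_polar_eq_dual_of_tail
    {V : Type*} [NormedAddCommGroup V] [InnerProductSpace ℝ V]
    [FiniteDimensional ℝ V]
    (Δ : Set V) (hcl : IsClosed Δ) (hconv : Convex ℝ Δ) (h0 : (0 : V) ∈ Δ) :
    closure (⋃ t ∈ Set.Ici (0 : ℝ), t • {x : V | ∀ u ∈ Δ, ⟪u, x⟫ ≥ -1}) =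
      {x : V | ∀ y ∈ {y : V | ∀ w ∈ Δ, ∀ t : ℝ, 0 ≤ t → w + t • y ∈ Δ},
        ⟪y, x⟫ ≥ 0} := by
  change closure (⋃ t ∈ Set.Ici (0 : ℝ), t • innerPolar Δ) =
    (ProperCone.innerDual (recessionCone Δ) : Set V)
  rw [← (convex_innerPolar Δ).coe_pointedConeHull_eq_biUnion_smul ⟨0, zero_mem_innerPolar Δ⟩,
    ← ProperCone.coe_innerDual_innerDual, coe_innerDual_innerPolar hcl hconv h0]
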